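/- arXiv:2312.16567 — 6 statements merged into one kernel-verified Lean document; each statement's English description precedes it below -/
import Mathlib

section
/- For every n ≥ 2 and every index 0 ≤ i ≤ n, there exists a unique group homomorphism d^i : T_n → T_{n+1} such that d^i(t_j) = t_j for all j < i, d^i(t_i) = t_{i+1} t_i t_{i+1} (when 1 ≤ i ≤ n−1), and d^i(t_j) = t_{j+1} for all j > i (here 1 ≤ j ≤ n−1 indexes the generators of T_n). -/
/-- Relators of the twin group `Tₘ`: squares of the generators, and far commutativity.
The generator indexed by `i : Fin (m-1)` is the twin `t_{i+1}` (1-based). -/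
def twinRels (m : ℕ) : Set (FreeGroup (Fin (m - 1))) :=
  {r | (∃ i : Fin (m - 1), r = FreeGroup.of i * FreeGroup.of i) ∨
       (∃ i j : Fin (m - 1), ((i : ℕ) + 2 ≤ (j : ℕ) ∨ (j : ℕ) + 2 ≤ (i : ℕ)) ∧
         r = FreeGroup.of i * FreeGroup.of j * (FreeGroup.of i)⁻¹ * (FreeGroup.of j)⁻¹)}

/-- The twin group `Tₘ` on `m` strands as a presented group. -/
abbrev TwinGroup (m : ℕ) : Type := PresentedGroup (twinRels m)

/-- The generator `t_{j+1}` (1-based) of `Tₘ`, for `j : Fin (m-1)`. -/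
def twinGen (m : ℕ) (j : Fin (m - 1)) : TwinGroup m := PresentedGroup.of j

/-- `IsCoface m i f` says that `f : Tₘ →* T_{m+1}` is the `i`-th coface homomorphism `dⁱ`
(`0 ≤ i ≤ m`): `dⁱ(t_j) = t_j` for `j < i`, `dⁱ(t_i) = t_{i+1} t_i t_{i+1}`, and
`dⁱ(t_j) = t_{j+1}` for `j > i`  (1-based `j`, so `t_j = twinGen m ⟨j-1, _⟩`). -/
def IsCoface (m i : ℕ) (f : TwinGroup m →* TwinGroup (m + 1)) : Prop :=
  ∀ j : Fin (m - 1),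
    (∀ _ : (j : ℕ) + 1 < i,
      f (twinGen m j) = twinGen (m + 1) ⟨(j : ℕ), by have := j.isLt; omega⟩) ∧
    (∀ _ : (j : ℕ) + 1 = i,
      f (twinGen m j) =
        twinGen (m + 1) ⟨i, by have := j.isLt; omega⟩ *
        twinGen (m + 1) ⟨i - 1, by have := j.isLt; omega⟩ *
        twinGen (m + 1) ⟨i, by have := j.isLt; omega⟩) ∧
    (∀ _ : i < (j : ℕ) + 1,
      f (twinGen m j) = twinGen (m + 1) ⟨(j : ℕ) + 1, by have := j.isLt; omega⟩)

lemma twinRel_eq_one {m : ℕ} {r : FreeGroup (Fin (m - 1))} (hr : r ∈ twinRels m) :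
    PresentedGroup.mk (twinRels m) r = 1 := by
  have : r ∈ Subgroup.normalClosure (twinRels m) := Subgroup.subset_normalClosure hr
  exact (QuotientGroup.eq_one_iff r).mpr this

lemma twinGen_sq (m : ℕ) (j : Fin (m - 1)) : twinGen m j * twinGen m j = 1 := by
  have := twinRel_eq_one (m := m) (r := FreeGroup.of j * FreeGroup.of j) (Or.inl ⟨j, rfl⟩)
  simpa [twinGen, PresentedGroup.of, map_mul] using this

open scoped commutatorElement in
lemma twinGen_comm (m : ℕ) (a b : Fin (m - 1))
    (h : (a : ℕ) + 2 ≤ (b : ℕ) ∨ (b : ℕ) + 2 ≤ (a : ℕ)) :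
    Commute (twinGen m a) (twinGen m b) := by
  have := twinRel_eq_one (m := m)
    (r := FreeGroup.of a * FreeGroup.of b * (FreeGroup.of a)⁻¹ * (FreeGroup.of b)⁻¹)
    (Or.inr ⟨a, b, h, rfl⟩)
  simp only [map_mul, map_inv] at this
  have h2 : ⁅twinGen m a, twinGen m b⁆ = 1 := this
  exact commutatorElement_eq_one_iff_commute.mp h2

open scoped commutatorElement in
/-- For every `n ≥ 2` and `0 ≤ i ≤ n` there exists a unique group
homomorphism `dⁱ : Tₙ →* T_{n+1}` with `dⁱ(t_j) = t_j` for `j < i`,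
`dⁱ(t_i) = t_{i+1} t_i t_{i+1}`, and `dⁱ(t_j) = t_{j+1}` for `j > i`. -/
theorem coface_exists_unique (n : ℕ) (hn : 2 ≤ n) (i : ℕ) (hi : i ≤ n) :
    ∃! f : TwinGroup n →* TwinGroup (n + 1), IsCoface n i f := by
  have hFin : (n + 1) - 1 = n := by omega
  -- the image of the j-th generator
  set F : Fin (n - 1) → TwinGroup (n + 1) := fun j =>
    if h : (j : ℕ) + 1 < i then twinGen (n + 1) ⟨(j : ℕ), by have := j.isLt; omega⟩
    else if h' : (j : ℕ) + 1 = i then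
      twinGen (n + 1) ⟨i, by have := j.isLt; omega⟩ *
      twinGen (n + 1) ⟨i - 1, by have := j.isLt; omega⟩ *
      twinGen (n + 1) ⟨i, by have := j.isLt; omega⟩
    else twinGen (n + 1) ⟨(j : ℕ) + 1, by have := j.isLt; omega⟩ with hF
  have hsq : ∀ j : Fin (n - 1), F j * F j = 1 := by
    intro j
    by_cases h1 : (j : ℕ) + 1 < i
    · simp only [hF, dif_pos h1]
      exact twinGen_sq _ _
    · by_cases h2 : (j : ℕ) + 1 = i
      · simp only [hF, dif_neg h1, dif_pos h2]
        set a := twinGen (n + 1) ⟨i, by have := j.isLt; omega⟩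
        set b := twinGen (n + 1) ⟨i - 1, by have := j.isLt; omega⟩
        have ha : a * a = 1 := twinGen_sq _ _
        have hb : b * b = 1 := twinGen_sq _ _
        calc a * b * a * (a * b * a) = a * b * (a * a) * b * a := by group
          _ = a * (b * b) * a := by rw [ha]; group
          _ = a * a := by rw [hb]; group
          _ = 1 := ha
      · simp only [hF, dif_neg h1, dif_neg h2]
        exact twinGen_sq _ _
  have hcomm : ∀ a b : Fin (n - 1), (a : ℕ) + 2 ≤ (b : ℕ) → Commute (F a) (F b) := by
    intro a b hab
    have hbi := b.isLt
    have hai := a.isLt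
    by_cases hb1 : (b : ℕ) + 1 < i
    · have ha1 : (a : ℕ) + 1 < i := by omega
      simp only [hF, dif_pos ha1, dif_pos hb1]
      exact twinGen_comm _ _ _ (by left; simpa using hab)
    · by_cases hb2 : (b : ℕ) + 1 = i
      · have ha1 : (a : ℕ) + 1 < i := by omega
        simp only [hF, dif_pos ha1, dif_neg hb1, dif_pos hb2]
        have c1 : Commute (twinGen (n + 1) ⟨(a : ℕ), by omega⟩)
            (twinGen (n + 1) ⟨i, by omega⟩) := twinGen_comm _ _ _ (by left; simp; omega)
        have c2 : Commute (twinGen (n + 1) ⟨(a : ℕ), by omega⟩)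
            (twinGen (n + 1) ⟨i - 1, by omega⟩) := twinGen_comm _ _ _ (by left; simp; omega)
        exact (c1.mul_right c2).mul_right c1
      · -- b > i case
        simp only [hF, dif_neg hb1, dif_neg hb2]
        by_cases ha1 : (a : ℕ) + 1 < i
        · simp only [dif_pos ha1]
          exact twinGen_comm _ _ _ (by left; simp; omega)
        · by_cases ha2 : (a : ℕ) + 1 = i
          · simp only [dif_neg ha1, dif_pos ha2]
            have c1 : Commute (twinGen (n + 1) ⟨i, by omega⟩)
                (twinGen (n + 1) ⟨(b : ℕ) + 1, by omega⟩) :=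
              twinGen_comm _ _ _ (by left; simp; omega)
            have c2 : Commute (twinGen (n + 1) ⟨i - 1, by omega⟩)
                (twinGen (n + 1) ⟨(b : ℕ) + 1, by omega⟩) :=
              twinGen_comm _ _ _ (by left; simp; omega)
            exact (c1.mul_left c2).mul_left c1
          · simp only [dif_neg ha1, dif_neg ha2]
            exact twinGen_comm _ _ _ (by left; simp; omega)
  have hrels : ∀ r ∈ twinRels n, FreeGroup.lift F r = 1 := by
    rintro r (⟨j, rfl⟩ | ⟨a, b, hab, rfl⟩)
    · simpa [map_mul] using hsq j
    · simp only [map_mul, map_inv, FreeGroup.lift_apply_of]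
      have hc : Commute (F a) (F b) := by
        rcases hab with h | h
        · exact hcomm a b h
        · exact (hcomm b a h).symm
      have : ⁅F a, F b⁆ = 1 := commutatorElement_eq_one_iff_commute.mpr hc
      simpa [commutatorElement_def] using this
  refine ⟨PresentedGroup.toGroup hrels, ?_, ?_⟩
  · intro j
    have hof : PresentedGroup.toGroup hrels (twinGen n j) = F j :=
      PresentedGroup.toGroup.of hrels
    refine ⟨?_, ?_, ?_⟩
    · intro h; rw [hof]; simp only [hF]; rw [dif_pos h]
    · intro h; rw [hof]; simp only [hF]
      rw [dif_neg (by omega), dif_pos h]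
    · intro h; rw [hof]; simp only [hF]
      rw [dif_neg (by omega), dif_neg (by omega)]
  · intro g hg
    apply PresentedGroup.ext
    intro x
    have hof : PresentedGroup.toGroup hrels (twinGen n x) = F x :=
      PresentedGroup.toGroup.of hrels
    have hx : g (twinGen n x) = F x := by
      rcases lt_trichotomy ((x : ℕ) + 1) i with h | h | h
      · rw [(hg x).1 h]; simp only [hF]; rw [dif_pos h]
      · rw [(hg x).2.1 h]; simp only [hF]; rw [dif_neg (by omega), dif_pos h]
      · rw [(hg x).2.2 h]; simp only [hF]; rw [dif_neg (by omega), dif_neg (by omega)]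
    show g (twinGen n x) = PresentedGroup.toGroup hrels (twinGen n x)
    rw [hx, hof]
end

section
/- For every n ≥ 2 and every 0 ≤ i ≤ n, the coface homomorphism d^i : T_n → T_{n+1} maps the pure twin group into the pure twin group, i.e., d^i(ker ν_n) ≤ ker ν_{n+1}. -/
/-- `IsNu m ν` says that `ν : Tₘ →* Sₘ` is the canonical projection sending the generator
`t_{j+1}` to the adjacent transposition `(j, j+1)` (0-based); its kernel is the pure twin
group `PTₘ`. -/
def IsNu (m : ℕ) (ν : TwinGroup m →* Equiv.Perm (Fin m)) : Prop :=
  ∀ j : Fin (m - 1),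
    ν (twinGen m j) =
      Equiv.swap ⟨(j : ℕ), by have := j.isLt; omega⟩ ⟨(j : ℕ) + 1, by have := j.isLt; omega⟩


lemma viaEmbedding_swap {α β : Type*} [DecidableEq α] [DecidableEq β]
    (ι : α ↪ β) (a b : α) :
    Equiv.Perm.viaEmbedding (Equiv.swap a b) ι = Equiv.swap (ι a) (ι b) := by
  ext x
  by_cases hx : x ∈ Set.range ι
  · obtain ⟨y, rfl⟩ := hx
    rw [Equiv.Perm.viaEmbedding_apply]
    rcases eq_or_ne y a with rfl | ha
    · simp
    rcases eq_or_ne y b with rfl | hb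
    · simp
    · rw [Equiv.swap_apply_of_ne_of_ne ha hb,
        Equiv.swap_apply_of_ne_of_ne (fun h => ha (ι.injective h))
          (fun h => hb (ι.injective h))]
  · rw [Equiv.Perm.viaEmbedding_apply_of_notMem _ _ _ hx,
      Equiv.swap_apply_of_ne_of_ne (fun h => hx ⟨a, h.symm⟩) (fun h => hx ⟨b, h.symm⟩)]

/-- For `n ≥ 2` and `0 ≤ i ≤ n`, the coface homomorphism
`dⁱ : Tₙ →* T_{n+1}` maps the pure twin group into the pure twin group:
`dⁱ(ker νₙ) ≤ ker ν_{n+1}`. -/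
theorem coface_maps_pure_to_pure (n : ℕ) (hn : 2 ≤ n) (i : ℕ) (hi : i ≤ n)
    (ν : TwinGroup n →* Equiv.Perm (Fin n)) (hν : IsNu n ν)
    (ν' : TwinGroup (n + 1) →* Equiv.Perm (Fin (n + 1))) (hν' : IsNu (n + 1) ν')
    (d : TwinGroup n →* TwinGroup (n + 1)) (hd : IsCoface n i d) :
    Subgroup.map d ν.ker ≤ ν'.ker := by
  have hp : i < n + 1 := by omega
  set p : Fin (n + 1) := ⟨i, hp⟩ with hpdef
  set ι : Fin n ↪ Fin (n + 1) := (Fin.succAboveOrderEmb p).toEmbedding with hιdef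
  have hι : ∀ k : Fin n,
      ((ι k : Fin (n + 1)) : ℕ) = if (k : ℕ) < i then (k : ℕ) else (k : ℕ) + 1 := by
    intro k
    show ((p.succAbove k : Fin (n + 1)) : ℕ) = _
    rw [Fin.succAbove]
    split_ifs with h1 h2 h2
    · rfl
    · exact absurd (by exact_mod_cast h1) h2
    · exact absurd (by exact_mod_cast h2) h1
    · rfl
  have hcomm : ν'.comp d = (Equiv.Perm.viaEmbeddingHom ι).comp ν := by
    apply PresentedGroup.ext
    intro x
    simp only [MonoidHom.comp_apply]
    have hx := hd x
    have hνx := hν x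
    have hjlt := x.isLt
    rcases lt_trichotomy ((x : ℕ) + 1) i with h | h | h
    · rw [show (PresentedGroup.of x : TwinGroup n) = twinGen n x from rfl, hx.1 h, hνx]
      rw [hν' ⟨(x : ℕ), by omega⟩, Equiv.Perm.viaEmbeddingHom_apply, viaEmbedding_swap]
      congr 1 <;> apply Fin.ext <;> simp only [hι, Fin.val_mk] <;> split_ifs <;> omega
    · rw [show (PresentedGroup.of x : TwinGroup n) = twinGen n x from rfl, hx.2.1 h, hνx]
      rw [Equiv.Perm.viaEmbeddingHom_apply, viaEmbedding_swap]
      rw [map_mul, map_mul, hν' ⟨i, by omega⟩, hν' ⟨i - 1, by omega⟩]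
      simp only [Fin.val_mk]
      have key := Equiv.swap_apply_apply
        (Equiv.swap (⟨i, by omega⟩ : Fin (n + 1)) ⟨i + 1, by omega⟩)
        (⟨i - 1, by omega⟩ : Fin (n + 1)) ⟨i, by omega⟩
      rw [Equiv.swap_inv] at key
      simp only [show i - 1 + 1 = i from by omega]
      rw [← key]
      have e1 : (Equiv.swap (⟨i, by omega⟩ : Fin (n + 1)) ⟨i + 1, by omega⟩)
          ⟨i - 1, by omega⟩ = ⟨i - 1, by omega⟩ := by
        apply Equiv.swap_apply_of_ne_of_ne <;> intro hc <;>
          have := congrArg Fin.val hc <;> simp at this <;> omega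
      have e2 : (Equiv.swap (⟨i, by omega⟩ : Fin (n + 1)) ⟨i + 1, by omega⟩)
          ⟨i, by omega⟩ = ⟨i + 1, by omega⟩ := Equiv.swap_apply_left _ _
      rw [e1, e2]
      congr 1 <;> apply Fin.ext <;> simp only [hι, Fin.val_mk] <;> split_ifs <;> omega
    · rw [show (PresentedGroup.of x : TwinGroup n) = twinGen n x from rfl, hx.2.2 h, hνx]
      rw [hν' ⟨(x : ℕ) + 1, by omega⟩, Equiv.Perm.viaEmbeddingHom_apply, viaEmbedding_swap]
      congr 1 <;> apply Fin.ext <;> simp only [hι, Fin.val_mk] <;> split_ifs <;> omega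
  rintro y ⟨g, hg, rfl⟩
  have hg1 : ν g = 1 := hg
  have : ν' (d g) = (Equiv.Perm.viaEmbeddingHom ι) (ν g) := by
    have := congrArg (fun f : TwinGroup n →* Equiv.Perm (Fin (n + 1)) => f g) hcomm
    simpa using this
  simp [MonoidHom.mem_ker, this, hg1]
end

section
/- Let n ≥ 2 and work in the twin group T_{n+1} with generators t_1, …, t_n. Define q_k = t_n t_{n−1} ⋯ t_{k+1} · t_k · t_{k+1} ⋯ t_{n−1} t_n for 1 ≤ k ≤ n−1 and q_n = t_n. Then t_k = q_{k+1} q_k q_{k+1} for every 1 ≤ k ≤ n−1, and the set {q_1, …, q_n} generates T_{n+1} (its Subgroup.closure is the whole group). -/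
/-- The generator `t_k` (1-based `k`, `1 ≤ k ≤ n`) of the twin group `T_{n+1}`
(and `1` for `k` out of range). -/
def tg (n k : ℕ) : TwinGroup (n + 1) :=
  if h : 1 ≤ k ∧ k ≤ n then twinGen (n + 1) ⟨k - 1, by omega⟩ else 1

/-- `q_k = t_n t_{n-1} ⋯ t_{k+1} · t_k · t_{k+1} ⋯ t_{n-1} t_n ∈ T_{n+1}` for
`1 ≤ k ≤ n-1`, and `q_n = t_n`. -/
def qElt (n k : ℕ) : TwinGroup (n + 1) :=
  (((List.range' (k + 1) (n - k)).reverse).map (tg n)).prod * tg n k *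
    ((List.range' (k + 1) (n - k)).map (tg n)).prod

section Aux

private lemma twin_rel_one {m : ℕ} {r : FreeGroup (Fin (m-1))} (h : r ∈ twinRels m) :
    PresentedGroup.mk (twinRels m) r = 1 := by
  exact PresentedGroup.one_of_mem h

private lemma twin_sq {m : ℕ} (i : Fin (m-1)) : twinGen m i * twinGen m i = 1 := by
  have := twin_rel_one (m := m) (Or.inl ⟨i, rfl⟩)
  simpa [twinGen, PresentedGroup.of, map_mul] using this

private lemma twin_comm {m : ℕ} (i j : Fin (m-1))
    (h : (i : ℕ) + 2 ≤ (j : ℕ) ∨ (j : ℕ) + 2 ≤ (i : ℕ)) :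
    twinGen m i * twinGen m j = twinGen m j * twinGen m i := by
  have h1 := twin_rel_one (m := m) (Or.inr ⟨i, j, h, rfl⟩)
  simp only [map_mul, map_inv] at h1
  have h2 : (PresentedGroup.mk (twinRels m) (FreeGroup.of i) *
      PresentedGroup.mk (twinRels m) (FreeGroup.of j)) *
      (PresentedGroup.mk (twinRels m) (FreeGroup.of j) *
      PresentedGroup.mk (twinRels m) (FreeGroup.of i))⁻¹ = 1 := by
    rw [mul_inv_rev]
    simpa [mul_assoc] using h1
  have h3 := mul_eq_one_iff_eq_inv.mp h2
  rw [inv_inv] at h3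
  simpa [twinGen, PresentedGroup.of] using h3

private lemma tg_sq (n k : ℕ) : tg n k * tg n k = 1 := by
  unfold tg
  split
  · exact twin_sq _
  · simp

private lemma tg_inv (n k : ℕ) : (tg n k)⁻¹ = tg n k :=
  inv_eq_of_mul_eq_one_right (tg_sq n k)

private lemma tg_comm (n j k : ℕ) (h : j + 2 ≤ k) : tg n j * tg n k = tg n k * tg n j := by
  unfold tg
  split
  · split
    · next h1 h2 =>
      apply twin_comm
      left
      simp only
      omega
    · simp
  · simp

private lemma prod_reverse_tg (n : ℕ) (l : List ℕ) :
    ((l.map (tg n)).reverse).prod = ((l.map (tg n)).prod)⁻¹ := by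
  induction l with
  | nil => simp
  | cons a l ih => simp [List.prod_append, ih, mul_inv_rev, tg_inv]

private lemma tg_comm_prod (n k : ℕ) (l : List ℕ) (h : ∀ j ∈ l, k + 2 ≤ j) :
    tg n k * (l.map (tg n)).prod = (l.map (tg n)).prod * tg n k := by
  induction l with
  | nil => simp
  | cons a l ih =>
    simp only [List.map_cons, List.prod_cons, ← mul_assoc,
      tg_comm n k a (h a List.mem_cons_self)]
    rw [mul_assoc, ih (fun j hj => h j (List.mem_cons_of_mem a hj)), mul_assoc]

private lemma qElt_eq (n k : ℕ) :
    qElt n k = (((List.range' (k + 1) (n - k)).map (tg n)).prod)⁻¹ * tg n k *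
      ((List.range' (k + 1) (n - k)).map (tg n)).prod := by
  rw [qElt, List.map_reverse, prod_reverse_tg]

end Aux

/-- In `T_{n+1}` one has `t_k = q_{k+1} q_k q_{k+1}` for `1 ≤ k ≤ n-1`, and
`{q_1, …, q_n}` generates `T_{n+1}`. -/
theorem q_generates (n : ℕ) (hn : 2 ≤ n) :
    (∀ k : ℕ, 1 ≤ k → k ≤ n - 1 → tg n k = qElt n (k + 1) * qElt n k * qElt n (k + 1)) ∧
      Subgroup.closure {x : TwinGroup (n + 1) | ∃ k : ℕ, 1 ≤ k ∧ k ≤ n ∧ x = qElt n k} = ⊤ := by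
  have part1 : ∀ k : ℕ, 1 ≤ k → k ≤ n - 1 →
      tg n k = qElt n (k + 1) * qElt n k * qElt n (k + 1) := by
    intro k hk1 hk2
    set B := ((List.range' (k + 2) (n - (k + 1))).map (tg n)).prod with hB
    have hrange : List.range' (k + 1) (n - k) = (k + 1) :: List.range' (k + 2) (n - (k + 1)) := by
      have h1 : n - k = (n - (k + 1)) + 1 := by omega
      rw [h1, List.range'_succ]
    have hAk : ((List.range' (k + 1) (n - k)).map (tg n)).prod = tg n (k + 1) * B := by
      rw [hrange]; simp [hB]
    have hcomm : tg n k * B = B * tg n k := by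
      apply tg_comm_prod
      intro j hj
      obtain ⟨i, hi, rfl⟩ := List.mem_range'.mp hj
      omega
    have hq1 : qElt n (k + 1) = B⁻¹ * tg n (k + 1) * B := by
      rw [qElt_eq]
    have hqk : qElt n k = (tg n (k + 1) * B)⁻¹ * tg n k * (tg n (k + 1) * B) := by
      rw [qElt_eq, hAk]
    rw [hq1, hqk]
    symm
    simp only [mul_inv_rev, tg_inv, mul_assoc, inv_mul_cancel_left, mul_inv_cancel_left]
    rw [← mul_assoc (tg n (k + 1)) (tg n (k + 1)), tg_sq, one_mul,
      ← mul_assoc (tg n (k + 1)) (tg n (k + 1)), tg_sq, one_mul, hcomm, inv_mul_cancel_left]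
  refine ⟨part1, ?_⟩
  set S := {x : TwinGroup (n + 1) | ∃ k : ℕ, 1 ≤ k ∧ k ≤ n ∧ x = qElt n k} with hS
  have hq : ∀ k, 1 ≤ k → k ≤ n → qElt n k ∈ Subgroup.closure S :=
    fun k h1 h2 => Subgroup.subset_closure ⟨k, h1, h2, rfl⟩
  have htg : ∀ k, 1 ≤ k → k ≤ n → tg n k ∈ Subgroup.closure S := by
    intro k h1 h2
    rcases eq_or_lt_of_le h2 with h | h
    · have he : qElt n n = tg n n := by
        simp [qElt, Nat.sub_self]
      rw [h, ← he]; exact hq n (by omega) le_rfl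
    · rw [part1 k h1 (by omega)]
      exact mul_mem (mul_mem (hq _ (by omega) (by omega)) (hq _ h1 (by omega)))
        (hq _ (by omega) (by omega))
  rw [eq_top_iff, ← PresentedGroup.closure_range_of (twinRels (n + 1)), Subgroup.closure_le]
  rintro x ⟨j, rfl⟩
  have hj : (j : ℕ) < n := j.isLt
  have hof : (PresentedGroup.of j : TwinGroup (n + 1)) = tg n ((j : ℕ) + 1) := by
    rw [tg, dif_pos ⟨by omega, by omega⟩]
    have hfin : (⟨(j : ℕ) + 1 - 1, by omega⟩ : Fin ((n + 1) - 1)) = j := Fin.ext (by simp)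
    rw [hfin]
    rfl
  rw [SetLike.mem_coe, hof]
  exact htg _ (by omega) (by omega)
end

section
/- The subgroup B = {w ∈ F : σ₁(w) = 0, σ₂(w)+σ₇(w) = 0, σ₃(w)+σ₆(w) = 0, σ₄(w)+σ₅(w) = 0} of the free group F = FreeGroup (Fin 7) is a free group, and B is not finitely generated (so B is a free group of infinite rank). -/
/-- The exponent-sum homomorphism of the free group `F = FreeGroup (Fin 7)` for the `i`-th
generator (0-based `i`; `σᵢ` of the paper is `expSum (i-1)`), valued in `Multiplicative ℤ`. -/
def expSum (i : Fin 7) : FreeGroup (Fin 7) →* Multiplicative ℤ :=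
  FreeGroup.lift fun j => Multiplicative.ofAdd (if j = i then (1 : ℤ) else 0)

/-- The exponent sum `σ_{i+1}(w)` as an integer (`i` is 0-based). -/
def sgm (i : Fin 7) (w : FreeGroup (Fin 7)) : ℤ := Multiplicative.toAdd (expSum i w)

lemma sgm_one (i : Fin 7) : sgm i 1 = 0 := by simp [sgm]

lemma sgm_mul (i : Fin 7) (a b : FreeGroup (Fin 7)) :
    sgm i (a * b) = sgm i a + sgm i b := by simp [sgm, map_mul]

lemma sgm_inv (i : Fin 7) (a : FreeGroup (Fin 7)) : sgm i a⁻¹ = -sgm i a := by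
  simp [sgm, map_inv]

/-- The subgroup `B = {w : σ₁(w) = 0, σ₂(w)+σ₇(w) = 0, σ₃(w)+σ₆(w) = 0, σ₄(w)+σ₅(w) = 0}`
of `FreeGroup (Fin 7)`, i.e. the Brunnian twin group `Brun(T₄)` inside `PT₄`. -/
def B : Subgroup (FreeGroup (Fin 7)) where
  carrier := {w | sgm 0 w = 0 ∧ sgm 1 w + sgm 6 w = 0 ∧ sgm 2 w + sgm 5 w = 0 ∧
    sgm 3 w + sgm 4 w = 0}
  one_mem' := by simp [Set.mem_setOf_eq, sgm_one]
  mul_mem' := by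
    intro a b ha hb
    simp only [Set.mem_setOf_eq, sgm_mul] at *
    omega
  inv_mem' := by
    intro a ha
    simp only [Set.mem_setOf_eq, sgm_inv] at *
    omega

namespace BAux
noncomputable section
set_option maxRecDepth 4000

open LaurentPolynomial

lemma sgm_of (i j : Fin 7) : sgm i (FreeGroup.of j) = if j = i then 1 else 0 := by
  simp [sgm, expSum]

lemma sgm_zpow (i : Fin 7) (a : FreeGroup (Fin 7)) (n : ℤ) :
    sgm i (a ^ n) = n * sgm i a := by
  simp [sgm, map_zpow, toAdd_zpow, smul_eq_mul]

/-- The affine group `{t^k x + p}` over Laurent polynomials (a model of `ℤ ≀ ℤ`). -/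
structure G where
  k : ℤ
  p : LaurentPolynomial ℤ

instance : Mul G := ⟨fun a b => ⟨a.k + b.k, a.p + T a.k * b.p⟩⟩
instance : One G := ⟨⟨0, 0⟩⟩
instance : Inv G := ⟨fun a => ⟨-a.k, -(T (-a.k) * a.p)⟩⟩

@[simp] lemma mul_k (a b : G) : (a * b).k = a.k + b.k := rfl
@[simp] lemma mul_p (a b : G) : (a * b).p = a.p + T a.k * b.p := rfl
@[simp] lemma one_k : (1 : G).k = 0 := rfl
@[simp] lemma one_p : (1 : G).p = 0 := rfl
@[simp] lemma inv_k (a : G) : a⁻¹.k = -a.k := rfl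
@[simp] lemma inv_p (a : G) : a⁻¹.p = -(T (-a.k) * a.p) := rfl

lemma G.ext' {a b : G} (h1 : a.k = b.k) (h2 : a.p = b.p) : a = b := by
  cases a; cases b; simp_all

instance : Group G where
  mul_assoc a b c := by
    apply G.ext'
    · simp [add_assoc]
    · simp only [mul_p, mul_k]
      rw [T_add]
      ring
  one_mul a := by apply G.ext' <;> simp
  mul_one a := by apply G.ext' <;> simp
  inv_mul_cancel a := by
    apply G.ext'
    · simp
    · simp

/-- Generator images: `x₁ ↦ (1, 0)`, `x₂ ↦ (0, 1)`, all others to `1`. -/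
def gen : Fin 7 → G := fun j => if j = 0 then ⟨1, 0⟩ else if j = 1 then ⟨0, 1⟩ else 1

def Φ : FreeGroup (Fin 7) →* G := FreeGroup.lift gen

def fstHom : G →* Multiplicative ℤ where
  toFun a := Multiplicative.ofAdd a.k
  map_one' := rfl
  map_mul' a b := rfl

lemma Φ_k (w : FreeGroup (Fin 7)) : (Φ w).k = sgm 0 w := by
  have h : fstHom.comp Φ = expSum 0 := by
    apply FreeGroup.ext_hom
    intro a
    fin_cases a <;>
      simp [fstHom, Φ, gen, expSum, MonoidHom.comp_apply, FreeGroup.lift_apply_of]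
  have := DFunLike.congr_fun h w
  simpa [sgm, fstHom, Φ] using congrArg Multiplicative.toAdd this

lemma cf_mul (n : ℤ) {a : FreeGroup (Fin 7)} (ha : sgm 0 a = 0) (b : FreeGroup (Fin 7)) :
    (Φ (a * b)).p.coeff n = (Φ a).p.coeff n + (Φ b).p.coeff n := by
  have : (Φ (a * b)).p = (Φ a).p + T (0 : ℤ) * (Φ b).p := by
    rw [map_mul, mul_p, Φ_k, ha]
  rw [this, T_zero, one_mul]
  rfl

lemma cf_inv (n : ℤ) {a : FreeGroup (Fin 7)} (ha : sgm 0 a = 0) :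
    (Φ a⁻¹).p.coeff n = -((Φ a).p.coeff n) := by
  have : (Φ a⁻¹).p = -(T (-(0 : ℤ)) * (Φ a).p) := by
    rw [map_inv, inv_p, Φ_k, ha]
  rw [this, neg_zero, T_zero, one_mul]
  rfl

/-- The embedding `ℤ → G`, `m ↦ (m, 0)`. -/
def ι : Multiplicative ℤ →* G where
  toFun m := ⟨Multiplicative.toAdd m, 0⟩
  map_one' := rfl
  map_mul' a b := by apply G.ext' <;> simp

lemma Φ_of_zero_zpow (n : ℤ) : (Φ (FreeGroup.of 0)) ^ n = ⟨n, 0⟩ := by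
  have h1 : Φ (FreeGroup.of 0) = ι (Multiplicative.ofAdd 1) := by
    apply G.ext' <;> simp [Φ, gen, ι]
  rw [h1, ← map_zpow]
  have : (Multiplicative.ofAdd (1 : ℤ)) ^ n = Multiplicative.ofAdd n := by
    apply Multiplicative.toAdd.injective
    simp [toAdd_zpow]
  rw [this]
  rfl

/-- The Brunnian test elements `x₁ⁿ x₂ x₇⁻¹ x₁⁻ⁿ`. -/
def bn (n : ℤ) : FreeGroup (Fin 7) :=
  (FreeGroup.of 0) ^ n * FreeGroup.of 1 * (FreeGroup.of 6)⁻¹ * (FreeGroup.of 0) ^ (-n)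

lemma bn_mem (n : ℤ) : bn n ∈ B := by
  have h := sgm_of
  refine ⟨?_, ?_, ?_, ?_⟩ <;>
    simp [bn, sgm_mul, sgm_inv, sgm_zpow, sgm_of]

lemma Φ_bn (n : ℤ) : Φ (bn n) = ⟨0, T n⟩ := by
  have h6 : Φ (FreeGroup.of 6) = 1 := by
    apply G.ext' <;> simp [Φ, gen]
  have h1 : Φ (FreeGroup.of 1) = ⟨0, 1⟩ := by
    simp [Φ, gen]
  rw [bn]
  rw [map_mul, map_mul, map_mul, map_zpow, map_zpow, map_inv, h6, h1,
    Φ_of_zero_zpow, Φ_of_zero_zpow, inv_one, mul_one]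
  apply G.ext'
  · simp
  · simp

lemma cf_bn (n : ℤ) : (Φ (bn n)).p.coeff n = 1 := by
  rw [Φ_bn]
  simp

end
end BAux


/-- The subgroup `B` (i.e. `Brun(T₄)`) is a free group and is not finitely
generated, so it is a free group of infinite rank. -/
theorem B_free_of_infinite_rank :
    (∃ S : Type, Nonempty (B ≃* FreeGroup S)) ∧ ¬ Group.FG B := by
  constructor
  · exact ⟨IsFreeGroup.Generators B, ⟨IsFreeGroup.toFreeGroup B⟩⟩
  · intro h
    obtain ⟨S, hS, hSfin⟩ := Group.fg_iff.mp h
    -- the union of the (finite) supports of the Laurent coefficient polynomials of generators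
    set Supp : Set ℤ := ⋃ s ∈ S, ((BAux.Φ ((s : B) : FreeGroup (Fin 7))).p.coeff.support : Set ℤ)
      with hSupp
    have hfin : Supp.Finite := hSfin.biUnion fun s _ => (Finset.finite_toSet _)
    obtain ⟨n, hn⟩ := ((Set.infinite_univ (α := ℤ)).diff hfin).nonempty
    have hn' : n ∉ Supp := hn.2
    have key : ∀ b : B, b ∈ Subgroup.closure S →
        (BAux.Φ ((b : B) : FreeGroup (Fin 7))).p.coeff n = 0 := by
      intro b hb
      induction hb using Subgroup.closure_induction with
      | mem s hs =>
          apply Finsupp.notMem_support_iff.mp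
          intro hmem
          exact hn' (Set.mem_biUnion hs hmem)
      | one => simp
      | mul x y hx hy ihx ihy =>
          have hxy : ((x * y : B) : FreeGroup (Fin 7)) = (x : FreeGroup (Fin 7)) * y := rfl
          rw [hxy, BAux.cf_mul n x.2.1, ihx, ihy, add_zero]
      | inv x hx ihx =>
          have hxy : ((x⁻¹ : B) : FreeGroup (Fin 7)) = (x : FreeGroup (Fin 7))⁻¹ := rfl
          rw [hxy, BAux.cf_inv n x.2.1, ihx, neg_zero]
    have h1 : (BAux.Φ (BAux.bn n)).p.coeff n = 0 :=
      key ⟨BAux.bn n, BAux.bn_mem n⟩ (hS ▸ Subgroup.mem_top _)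
    rw [BAux.cf_bn n] at h1
    exact one_ne_zero h1
end

section
/- Let φ : FreeGroup (Fin 7) →* (Fin 4 → ℤ) be the homomorphism determined on free generators by φ(x₁) = e₁, φ(x₂) = φ(x₇) = e₂, φ(x₃) = φ(x₆) = e₃, φ(x₄) = φ(x₅) = e₄, where e₁, e₂, e₃, e₄ are the standard basis vectors of ℤ⁴. Then φ is surjective and ker φ = B; consequently B is a normal subgroup of F = FreeGroup (Fin 7) and the quotient F ⧸ B is isomorphic to the free abelian group ℤ⁴ (i.e., PT₄/Brun(T₄) is free abelian of rank 4). -/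
/-- The map sending a free generator `x_{j+1}` (0-based `j`) to the index of the standard
basis vector of `ℤ⁴` it is mapped to: `x₁ ↦ e₁`, `x₂, x₇ ↦ e₂`, `x₃, x₆ ↦ e₃`,
`x₄, x₅ ↦ e₄`. -/
def emap : Fin 7 → Fin 4 := ![0, 1, 2, 3, 3, 2, 1]

/-- The homomorphism `φ : FreeGroup (Fin 7) →* ℤ⁴` (written multiplicatively) determined by
`φ(xⱼ) = e_{emap j}`. -/
def phi : FreeGroup (Fin 7) →* Multiplicative (Fin 4 → ℤ) :=
  FreeGroup.lift fun j => Multiplicative.ofAdd (Pi.single (emap j) (1 : ℤ))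

/-- Evaluation at coordinate `k` as a monoid hom. -/
def evalHom (k : Fin 4) : Multiplicative (Fin 4 → ℤ) →* Multiplicative ℤ :=
  MonoidHom.mk' (fun x => Multiplicative.ofAdd (Multiplicative.toAdd x k)) (by
    intro a b; rfl)

lemma eval0 : (evalHom 0).comp phi = expSum 0 := by
  apply FreeGroup.ext_hom; intro j
  fin_cases j <;>
    simp [evalHom, phi, expSum, MonoidHom.mul_apply, emap, Pi.single_apply] <;> decide

lemma eval1 : (evalHom 1).comp phi = expSum 1 * expSum 6 := by
  apply FreeGroup.ext_hom; intro j
  fin_cases j <;>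
    simp [evalHom, phi, expSum, MonoidHom.mul_apply, emap, Pi.single_apply] <;> decide

lemma eval2 : (evalHom 2).comp phi = expSum 2 * expSum 5 := by
  apply FreeGroup.ext_hom; intro j
  fin_cases j <;>
    simp [evalHom, phi, expSum, MonoidHom.mul_apply, emap, Pi.single_apply] <;> decide

lemma eval3 : (evalHom 3).comp phi = expSum 3 * expSum 4 := by
  apply FreeGroup.ext_hom; intro j
  fin_cases j <;>
    simp [evalHom, phi, expSum, MonoidHom.mul_apply, emap, Pi.single_apply] <;> decide

lemma phi_coord (w : FreeGroup (Fin 7)) :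
    Multiplicative.toAdd (phi w) 0 = sgm 0 w ∧
    Multiplicative.toAdd (phi w) 1 = sgm 1 w + sgm 6 w ∧
    Multiplicative.toAdd (phi w) 2 = sgm 2 w + sgm 5 w ∧
    Multiplicative.toAdd (phi w) 3 = sgm 3 w + sgm 4 w := by
  refine ⟨?_, ?_, ?_, ?_⟩
  · have := congrArg (fun f => f w) eval0
    simpa [evalHom, sgm, MonoidHom.comp_apply] using congrArg Multiplicative.toAdd this
  · have := congrArg (fun f => f w) eval1
    simpa [evalHom, sgm, MonoidHom.comp_apply, MonoidHom.mul_apply] using congrArg Multiplicative.toAdd this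
  · have := congrArg (fun f => f w) eval2
    simpa [evalHom, sgm, MonoidHom.comp_apply, MonoidHom.mul_apply] using congrArg Multiplicative.toAdd this
  · have := congrArg (fun f => f w) eval3
    simpa [evalHom, sgm, MonoidHom.comp_apply, MonoidHom.mul_apply] using congrArg Multiplicative.toAdd this

/-- `φ` is surjective with kernel `B`; consequently `B` is normal in
`FreeGroup (Fin 7)` and the quotient is isomorphic to the free abelian group `ℤ⁴`
(i.e. `PT₄/Brun(T₄) ≅ ℤ⁴`). -/
theorem B_kernel_quotient_free_abelian :
    Function.Surjective phi ∧ phi.ker = B ∧ B.Normal ∧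
      Nonempty ((FreeGroup (Fin 7) ⧸ phi.ker) ≃* Multiplicative (Fin 4 → ℤ)) := by
  have hsurj : Function.Surjective phi := by
    intro v
    refine ⟨(FreeGroup.of 0) ^ (Multiplicative.toAdd v 0) *
      (FreeGroup.of 1) ^ (Multiplicative.toAdd v 1) *
      (FreeGroup.of 2) ^ (Multiplicative.toAdd v 2) *
      (FreeGroup.of 3) ^ (Multiplicative.toAdd v 3), ?_⟩
    have h : ∀ j : Fin 7, phi (FreeGroup.of j) =
        Multiplicative.ofAdd (Pi.single (emap j) (1 : ℤ)) := fun j => by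
      simp [phi]
    simp only [map_mul, map_zpow, h]
    rw [← ofAdd_zsmul, ← ofAdd_zsmul, ← ofAdd_zsmul, ← ofAdd_zsmul,
      ← ofAdd_add, ← ofAdd_add, ← ofAdd_add]
    apply Multiplicative.toAdd.injective
    funext k
    fin_cases k <;> simp [emap, Pi.single_apply] <;> decide
  have hker : phi.ker = B := by
    ext w
    obtain ⟨h0, h1, h2, h3⟩ := phi_coord w
    constructor
    · intro hw
      rw [MonoidHom.mem_ker] at hw
      have : Multiplicative.toAdd (phi w) = 0 := by rw [hw]; rfl
      rw [this] at h0 h1 h2 h3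
      exact ⟨h0.symm, h1.symm, h2.symm, h3.symm⟩
    · rintro ⟨g0, g1, g2, g3⟩
      rw [MonoidHom.mem_ker]
      apply Multiplicative.toAdd.injective
      funext k
      fin_cases k
      · simpa [g0] using h0
      · simpa [g1] using h1
      · simpa [g2] using h2
      · simpa [g3] using h3
  exact ⟨hsurj, hker, hker ▸ phi.normal_ker,
    ⟨QuotientGroup.quotientKerEquivOfSurjective phi hsurj⟩⟩
end

section
/- In the free group FreeGroup (Fin 31) with free generators a₁, …, a₃₁, the group homomorphism FreeGroup (Fin 6) →* FreeGroup (Fin 31) determined by sending the six free generators to a₈·a₁₆·a₂₆, a₂₃·a₉·a₃₁·a₁₇, a₃·a₁₉·a₁₁·a₃₀, a₂₉·a₂₅·a₁₀, a₁₂·a₂₈·a₂·a₂₀, and a₁·a₁₃·a₂₇ respectively is injective; hence the subgroup generated by these six elements is free of rank 6 (this is the statement K₄ ≅ F[S²]₄, a free group of rank 6). -/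
/-- The map sending the six free generators of `FreeGroup (Fin 6)` to the six elements
`a₈a₁₆a₂₆`, `a₂₃a₉a₃₁a₁₇`, `a₃a₁₉a₁₁a₃₀`, `a₂₉a₂₅a₁₀`, `a₁₂a₂₈a₂a₂₀`, `a₁a₁₃a₂₇` of
`FreeGroup (Fin 31)` (here `aᵢ` is the free generator `FreeGroup.of (i-1)`). -/
def kGen4 : Fin 6 → FreeGroup (Fin 31) :=
  ![FreeGroup.of 7 * FreeGroup.of 15 * FreeGroup.of 25,
    FreeGroup.of 22 * FreeGroup.of 8 * FreeGroup.of 30 * FreeGroup.of 16,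
    FreeGroup.of 2 * FreeGroup.of 18 * FreeGroup.of 10 * FreeGroup.of 29,
    FreeGroup.of 28 * FreeGroup.of 24 * FreeGroup.of 9,
    FreeGroup.of 11 * FreeGroup.of 27 * FreeGroup.of 1 * FreeGroup.of 19,
    FreeGroup.of 0 * FreeGroup.of 12 * FreeGroup.of 26]

/-- A retraction on generators: the first letter of each of the six words goes to the
corresponding generator of `FreeGroup (Fin 6)`, every other letter goes to `1`. -/
def kRetr4 : Fin 31 → FreeGroup (Fin 6) := fun i =>
  if i = 7 then FreeGroup.of 0
  else if i = 22 then FreeGroup.of 1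
  else if i = 2 then FreeGroup.of 2
  else if i = 28 then FreeGroup.of 3
  else if i = 11 then FreeGroup.of 4
  else if i = 0 then FreeGroup.of 5
  else 1

lemma kRetr4_leftInverse :
    Function.LeftInverse ⇑(FreeGroup.lift kRetr4) ⇑(FreeGroup.lift kGen4) := by
  have h : (FreeGroup.lift kRetr4).comp (FreeGroup.lift kGen4) = MonoidHom.id _ := by
    apply FreeGroup.ext_hom
    intro i
    fin_cases i <;>
      simp [kGen4, kRetr4, Matrix.cons_val_zero, Matrix.cons_val_one, Matrix.head_cons,
        Matrix.cons_val_fin_one, show ((5:Fin 6)) = 5 from rfl] <;>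
      try rfl
  intro x
  have := DFunLike.congr_fun h x
  simpa using this

/-- The homomorphism `FreeGroup (Fin 6) →* FreeGroup (Fin 31)` sending the
six free generators to the listed products is injective; hence the subgroup generated by these
six elements is free of rank 6 (this is `K₄ ≅ F[S²]₄`). -/
theorem K4_free_of_rank_six :
    Function.Injective ⇑(FreeGroup.lift kGen4) ∧
      Nonempty ((Subgroup.closure
          {kGen4 0, kGen4 1, kGen4 2, kGen4 3, kGen4 4, kGen4 5} :
            Subgroup (FreeGroup (Fin 31))) ≃* FreeGroup (Fin 6)) := by
  have hinj : Function.Injective ⇑(FreeGroup.lift kGen4) :=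
    kRetr4_leftInverse.injective
  refine ⟨hinj, ?_⟩
  have hrange : Set.range kGen4 =
      {kGen4 0, kGen4 1, kGen4 2, kGen4 3, kGen4 4, kGen4 5} := by
    ext x
    constructor
    · rintro ⟨i, rfl⟩
      fin_cases i <;> simp
    · intro hx
      rcases hx with h | h | h | h | h | h <;>
        exact ⟨_, h.symm⟩
  have hcl : (FreeGroup.lift kGen4).range =
      Subgroup.closure {kGen4 0, kGen4 1, kGen4 2, kGen4 3, kGen4 4, kGen4 5} := by
    rw [← hrange, FreeGroup.range_lift_eq_closure]
  exact ⟨(MulEquiv.subgroupCongr hcl).symm.trans (MonoidHom.ofInjective hinj).symm⟩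
end
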